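/- arXiv:1602.06123 — 3 statements merged into one kernel-verified Lean document; each statement's English description precedes it below -/
import Mathlib

section
/- Let $S$ be a sublinear operator on simple functions on $\mathbb{R}$ with $\|Sf\|_\infty \le C\|f\|_1$, and define $Tf(x) = |x|^{1/(p_0-1)} Sf(x)$ for some fixed $p_0 > 1$. Let $\mu$ be the measure $d\mu = |x|^{-p_0/(p_0-1)} dx$ on $\mathbb{R}$. Then for every $\lambda > 0$, $\mu(\{x : |Tf(x)| > \lambda\}) \le \frac{C'}{\lambda} \|f\|_{L^1}$ for some constant $C'$ depending only on $C$ and $p_0$; that is, $T$ maps $L^1(\mathbb{R})$ to weak $L^1(\mathbb{R}, d\mu)$. -/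
/-!
Since `‖Sf‖_∞ ≤ C ‖f‖₁ =: M`, the level set `{λ < |x|^{1/(p₀-1)} |Sf x|}` lies, up to a null set,
in `{|x| > (λ/M)^{p₀-1}}`, and the `μ`-measure of `{|x| > r}` is `2 (p₀ - 1) r^{-1/(p₀-1)}`,
which for this `r` is `2 (p₀ - 1) M / λ`.
-/

open MeasureTheory ENNReal Set

theorem ae_abs_le_of_eLpNorm_top_le {α : Type*} [MeasurableSpace α] {μ : Measure α}
    {g : α → ℝ} {M : ℝ} (hM : 0 ≤ M) (h : eLpNorm g ∞ μ ≤ ENNReal.ofReal M) :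
    ∀ᵐ x ∂μ, |g x| ≤ M := by
  rw [eLpNorm_exponent_top] at h
  filter_upwards [ae_le_eLpNormEssSup (f := g) (μ := μ)] with x hx
  rw [Real.enorm_eq_ofReal_abs] at hx
  exact (ENNReal.ofReal_le_ofReal_iff hM).1 (hx.trans h)

theorem setLIntegral_lt_abs_comp_abs (g : ℝ → ℝ≥0∞) {r : ℝ} (hr : 0 ≤ r) :
    ∫⁻ x in {x | r < |x|}, g |x| = 2 * ∫⁻ x in Ioi r, g x := by
  have hsplit : {x : ℝ | r < |x|} = Iio (-r) ∪ Ioi r := by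
    ext x
    simp only [mem_ofPred_eq, mem_union, mem_Iio, mem_Ioi, lt_abs, lt_neg]
    tauto
  have hright : ∫⁻ x in Ioi r, g |x| = ∫⁻ x in Ioi r, g x :=
    setLIntegral_congr_fun measurableSet_Ioi fun x hx => by
      rw [abs_of_pos (hr.trans_lt hx)]
  have hleft : ∫⁻ x in Iio (-r), g |x| = ∫⁻ x in Ioi r, g |x| := by
    have := (Measure.measurePreserving_neg (volume : Measure ℝ)).setLIntegral_comp_preimage_emb
      (Homeomorph.neg ℝ).measurableEmbedding (fun x => g |x|) (Ioi r)
    simpa only [abs_neg, neg_preimage, neg_Ioi] using this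
  rw [hsplit, lintegral_union measurableSet_Ioi (Ioi_disjoint_Iio_of_le (by linarith)).symm,
    hleft, hright, two_mul]

theorem setLIntegral_Ioi_rpow_of_lt {q r : ℝ} (hq : 1 < q) (hr : 0 < r) :
    ∫⁻ x in Ioi r, ENNReal.ofReal (x ^ (-q)) = ENNReal.ofReal (r ^ (1 - q) / (q - 1)) := by
  rw [← ofReal_integral_eq_lintegral_ofReal (integrableOn_Ioi_rpow_of_lt (by linarith) hr)
    (ae_restrict_of_forall_mem measurableSet_Ioi fun x hx =>
      Real.rpow_nonneg (hr.trans hx).le _),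
    integral_Ioi_rpow_of_lt (by linarith) hr]
  congr 1
  rw [show -q + 1 = 1 - q by ring, neg_div, ← div_neg, neg_sub]

theorem withDensity_abs_rpow_neg_setOf_lt_abs {q r : ℝ} (hq : 1 < q) (hr : 0 < r) :
    volume.withDensity (fun x : ℝ => ENNReal.ofReal (|x| ^ (-q))) {x | r < |x|} =
      ENNReal.ofReal (2 * (r ^ (1 - q) / (q - 1))) := by
  rw [withDensity_apply _ (measurableSet_lt measurable_const measurable_abs),
    setLIntegral_lt_abs_comp_abs (fun t => ENNReal.ofReal (t ^ (-q))) hr.le,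
    setLIntegral_Ioi_rpow_of_lt hq hr, ENNReal.ofReal_mul zero_le_two, ENNReal.ofReal_ofNat]

theorem div_rpow_inv_lt_of_lt_rpow_mul {a M lam t y : ℝ} (ha : 0 < a) (hM : 0 < M)
    (hlam : 0 < lam) (ht : 0 ≤ t) (hy : y ≤ M) (hty : lam < t ^ a * y) : (lam / M) ^ a⁻¹ < t := by
  have hyM : t ^ a * y ≤ t ^ a * M := by gcongr
  have hlt : lam / M < t ^ a := (div_lt_iff₀ hM).2 (hty.trans_le hyM)
  calc (lam / M) ^ a⁻¹ < (t ^ a) ^ a⁻¹ :=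
        Real.rpow_lt_rpow (div_pos hlam hM).le hlt (inv_pos.2 ha)
    _ = t := Real.rpow_rpow_inv ht ha.ne'

theorem withDensity_setOf_lt_abs_rpow_mul_le {g : ℝ → ℝ} {a M lam : ℝ} (ha : 0 < a)
    (hlam : 0 < lam) (hM : 0 ≤ M) (hg : ∀ᵐ x, |g x| ≤ M) :
    volume.withDensity (fun x : ℝ => ENNReal.ofReal (|x| ^ (-(1 + a))))
        {x | lam < |x| ^ a * |g x|} ≤ ENNReal.ofReal (2 * M / (a * lam)) := by
  rcases hM.eq_or_lt with rfl | hM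
  · refine (le_of_eq (withDensity_absolutelyContinuous _ _ ?_)).trans zero_le
    rw [measure_eq_zero_iff_ae_notMem]
    filter_upwards [hg] with x hx hlt
    rw [le_antisymm hx (abs_nonneg _), mul_zero] at hlt
    exact hlt.not_gt hlam
  set r := (lam / M) ^ a⁻¹
  have hr : 0 < r := Real.rpow_pos_of_pos (div_pos hlam hM) _
  have hsub : {x | lam < |x| ^ a * |g x|}
      ≤ᵐ[volume.withDensity fun x : ℝ => ENNReal.ofReal (|x| ^ (-(1 + a)))] {x | r < |x|} :=
    (withDensity_absolutelyContinuous _ _).ae_le <| by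
      filter_upwards [hg] with x hx hlt
      exact div_rpow_inv_lt_of_lt_rpow_mul ha hM hlam (abs_nonneg x) hx hlt
  have hr_pow : r ^ (1 - (1 + a)) = M / lam := by
    rw [show 1 - (1 + a) = -a by ring, Real.rpow_neg hr.le,
      Real.rpow_inv_rpow (div_pos hlam hM).le ha.ne', inv_div]
  calc _ ≤ _ := measure_mono_ae hsub
    _ = _ := withDensity_abs_rpow_neg_setOf_lt_abs (by linarith) hr
    _ = ENNReal.ofReal (2 * M / (a * lam)) := by
      rw [hr_pow, add_sub_cancel_left]
      congr 1
      field_simp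

theorem stmt1_general (p₀ : ℝ) (hp₀ : 1 < p₀) (S : (ℝ → ℝ) → (ℝ → ℝ)) (C : ℝ)
    (h1 : ∀ f : SimpleFunc ℝ ℝ,
      eLpNorm (S ⇑f) ∞ volume ≤ ENNReal.ofReal C * eLpNorm (⇑f) 1 volume) :
    ∃ C' : ℝ, 0 < C' ∧ ∀ f : SimpleFunc ℝ ℝ, ∀ lam : ℝ, 0 < lam →
      (volume.withDensity fun x : ℝ => ENNReal.ofReal (|x| ^ (-(p₀ / (p₀ - 1)))))
          {x : ℝ | lam < |x| ^ (1 / (p₀ - 1)) * |S ⇑f x|} ≤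
        ENNReal.ofReal (C' / lam) * ∫⁻ x : ℝ, ENNReal.ofReal |f x| := by
  have hp : 0 < p₀ - 1 := sub_pos.2 hp₀
  have hq : p₀ / (p₀ - 1) = 1 + 1 / (p₀ - 1) := by field_simp; ring
  refine ⟨2 * (p₀ - 1) * (max C 0 + 1), by positivity, fun f lam hlam => ?_⟩
  set L := ∫⁻ x, ENNReal.ofReal |f x|
  rcases eq_or_ne L ⊤ with hL | hL
  · rw [hL, ENNReal.mul_top (ENNReal.ofReal_pos.2 (by positivity)).ne']
    exact le_top
  have hSf : ∀ᵐ x, |S f x| ≤ max C 0 * L.toReal := by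
    refine ae_abs_le_of_eLpNorm_top_le (by positivity) ((h1 f).trans ?_)
    rw [eLpNorm_one_eq_lintegral_enorm, ENNReal.ofReal_mul (le_max_right _ _),
      ENNReal.ofReal_toReal hL]
    simp_rw [Real.enorm_eq_ofReal_abs]
    gcongr
    exact le_max_left _ _
  rw [hq]
  calc _ ≤ ENNReal.ofReal (2 * (max C 0 * L.toReal) / (1 / (p₀ - 1) * lam)) :=
        withDensity_setOf_lt_abs_rpow_mul_le (by positivity) hlam (by positivity) hSf
    _ ≤ ENNReal.ofReal (2 * (p₀ - 1) * (max C 0 + 1) / lam * L.toReal) := by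
        rw [show 2 * (max C 0 * L.toReal) / (1 / (p₀ - 1) * lam) =
          2 * (p₀ - 1) * max C 0 / lam * L.toReal by field_simp]
        gcongr
        linarith
    _ = _ := by rw [ENNReal.ofReal_mul (by positivity), ENNReal.ofReal_toReal hL]

theorem stmt1 (p₀ : ℝ) (hp₀ : 1 < p₀) (S : (ℝ → ℝ) → (ℝ → ℝ)) (C : ℝ)
    (hsub : ∀ f g : SimpleFunc ℝ ℝ, ∀ x : ℝ,
      |S (⇑f + ⇑g) x| ≤ |S ⇑f x| + |S ⇑g x|)
    (hhom : ∀ (c : ℝ) (f : SimpleFunc ℝ ℝ), ∀ x : ℝ,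
      |S (fun y => c * f y) x| = |c| * |S ⇑f x|)
    (h1 : ∀ f : SimpleFunc ℝ ℝ,
      eLpNorm (S ⇑f) ∞ volume ≤ ENNReal.ofReal C * eLpNorm (⇑f) 1 volume) :
    ∃ C' : ℝ, 0 < C' ∧ ∀ f : SimpleFunc ℝ ℝ, ∀ lam : ℝ, 0 < lam →
      (volume.withDensity fun x : ℝ => ENNReal.ofReal (|x| ^ (-(p₀ / (p₀ - 1)))))
          {x : ℝ | lam < |x| ^ (1 / (p₀ - 1)) * |S ⇑f x|} ≤
        ENNReal.ofReal (C' / lam) * ∫⁻ x : ℝ, ENNReal.ofReal |f x| :=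
  stmt1_general p₀ hp₀ S C h1
end

section
/- The operator $Wf(x) = \int_{-\infty}^{\infty} e^{i(x-y)^n} |x(x-y)^{n-3}|^{1/2} f(y)\,dy$, for an integer $n \ge 3$, is not bounded on $L^2(\mathbb{R})$. More precisely, if $f_N$ is the characteristic function of the interval $(N, N + (\pi/16)^{1/n})$ for $N \ge 1$, then $\|Wf_N\|_2 / \|f_N\|_2 \to \infty$ as $N \to \infty$. -/
/-!
Let `d = (π/16)^(1/n)`, `a = (π/8)^(1/n)`, `b = (π/4)^(1/n)`. For `x ∈ (N + a, N + b)` and `y` in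
the support `(N, N + d)` of `f_N`, the phase `(x - y)^n` lies in `[0, π/4]`, so the real part of
the integrand is at least `cos (π/4) · √(N (a - d)^(n-3))`: nothing cancels, and
`|W f_N| ≥ c √N` on an interval of fixed length `b - a`, whereas `‖f_N‖₂ = √d` does not depend
on `N`.
-/

open MeasureTheory ENNReal Real Filter Set Topology

theorem integral_mul_indicator_one {α : Type*} [MeasurableSpace α] {μ : Measure α}
    {s : Set α} (hs : MeasurableSet s) (f : α → ℂ) :
    ∫ y, f y * ((s.indicator 1 y : ℝ) : ℂ) ∂μ = ∫ y in s, f y ∂μ := by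
  rw [← integral_indicator hs]
  congr 1
  funext y
  by_cases hy : y ∈ s <;> simp [hy]

theorem mul_measureReal_le_norm_setIntegral {α : Type*} [MeasurableSpace α] {μ : Measure α}
    {s : Set α} {f : α → ℂ} {c : ℝ} (hs : MeasurableSet s) (hμs : μ s ≠ ∞)
    (hf : IntegrableOn f s μ) (hc : ∀ y ∈ s, c ≤ (f y).re) :
    c * μ.real s ≤ ‖∫ y in s, f y ∂μ‖ :=
  calc c * μ.real s ≤ ∫ y in s, (f y).re ∂μ :=
        setIntegral_ge_of_const_le_real hs hμs hc hf.re
    _ = (∫ y in s, f y ∂μ).re := integral_re hf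
    _ ≤ ‖∫ y in s, f y ∂μ‖ := Complex.re_le_norm _

theorem eLpNorm_two_indicator_Ioo_const {a b c : ℝ} (hab : a ≤ b) (hc : 0 ≤ c) :
    eLpNorm ((Ioo a b).indicator fun _ => c) 2 volume = ENNReal.ofReal (c * √(b - a)) := by
  rw [eLpNorm_indicator_const measurableSet_Ioo two_ne_zero ofNat_ne_top, Real.volume_Ioo,
    Real.enorm_eq_ofReal hc, toReal_ofNat, ENNReal.ofReal_rpow_of_nonneg (sub_nonneg.2 hab)
    (by norm_num), ← Real.sqrt_eq_rpow, ← ENNReal.ofReal_mul hc]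

theorem sqrt_two_div_two_le_cos {θ : ℝ} (h₀ : 0 ≤ θ) (h₁ : θ ≤ π / 4) : √2 / 2 ≤ cos θ := by
  rw [← cos_pi_div_four]
  exact cos_le_cos_of_nonneg_of_le_pi h₀ (by linarith [pi_pos]) h₁

namespace OscillatoryKernel

noncomputable def kernel (n : ℕ) (x y : ℝ) : ℂ :=
  Complex.exp (Complex.I * ((x : ℂ) - (y : ℂ)) ^ n) * (√|x * (x - y) ^ (n - 3)| : ℂ)

variable {n : ℕ}

theorem continuous_kernel (x : ℝ) : Continuous (kernel n x) := by
  unfold kernel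
  fun_prop

theorem re_kernel (x y : ℝ) :
    (kernel n x y).re = cos ((x - y) ^ n) * √|x * (x - y) ^ (n - 3)| := by
  have : Complex.I * ((x : ℂ) - (y : ℂ)) ^ n = (((x - y) ^ n : ℝ) : ℂ) * Complex.I := by
    push_cast; ring
  rw [kernel, this, mul_comm, Complex.re_ofReal_mul, Complex.exp_ofReal_mul_I_re, mul_comm]

theorem le_re_kernel {N c x y : ℝ} (hN : 0 ≤ N) (hx : N ≤ x) (hc : 0 ≤ c) (hxy : c ≤ x - y)
    (hphase : (x - y) ^ n ≤ π / 4) :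
    √2 / 2 * √(N * c ^ (n - 3)) ≤ (kernel n x y).re := by
  rw [re_kernel]
  have hpow : 0 ≤ (x - y) ^ n := pow_nonneg (hc.trans hxy) n
  have hamp : N * c ^ (n - 3) ≤ |x * (x - y) ^ (n - 3)| := by
    rw [abs_of_nonneg (mul_nonneg (hN.trans hx) (pow_nonneg (hc.trans hxy) _))]
    exact mul_le_mul hx (pow_le_pow_left₀ hc hxy _) (pow_nonneg hc _) (hN.trans hx)
  have hcos := sqrt_two_div_two_le_cos hpow hphase
  exact mul_le_mul hcos (Real.sqrt_le_sqrt hamp) (Real.sqrt_nonneg _)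
    ((by positivity : (0 : ℝ) ≤ √2 / 2).trans hcos)

theorem le_norm_integral_kernel_indicator {N d a b x : ℝ} (hN : 0 ≤ N) (hd : 0 < d)
    (hda : d < a) (hb : b ^ n ≤ π / 4) (hx : x ∈ Ioo (N + a) (N + b)) :
    √2 / 2 * √((a - d) ^ (n - 3)) * d * √N ≤
      ‖∫ y, kernel n x y * ((Ioo N (N + d)).indicator 1 y : ℝ)‖ := by
  have hphase : ∀ y ∈ Ioo N (N + d), (x - y) ^ n ≤ π / 4 := fun y hy =>
    (pow_le_pow_left₀ (by linarith [hx.1, hy.2]) (by linarith [hx.2, hy.1]) n).trans hb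
  rw [integral_mul_indicator_one measurableSet_Ioo]
  calc √2 / 2 * √((a - d) ^ (n - 3)) * d * √N
      = √2 / 2 * √(N * (a - d) ^ (n - 3)) * volume.real (Ioo N (N + d)) := by
        rw [Real.sqrt_mul hN]; simp [hd.le]; ring
    _ ≤ _ := mul_measureReal_le_norm_setIntegral measurableSet_Ioo measure_Ioo_lt_top.ne
        ((continuous_kernel x).integrableOn_Icc.mono_set Ioo_subset_Icc_self) fun y hy =>
          le_re_kernel hN (by linarith [hx.1]) (by linarith) (by linarith [hx.1, hy.2])
            (hphase y hy)

theorem ofReal_le_eLpNorm_integral_kernel_indicator {N d a b : ℝ} (hN : 0 ≤ N) (hd : 0 < d)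
    (hda : d < a) (hab : a ≤ b) (hb : b ^ n ≤ π / 4) :
    ENNReal.ofReal (√2 / 2 * √((a - d) ^ (n - 3)) * d * √N * √(b - a)) ≤
      eLpNorm (fun x => ∫ y, kernel n x y * ((Ioo N (N + d)).indicator 1 y : ℝ)) 2 volume := by
  rw [show b - a = N + b - (N + a) by ring,
    ← eLpNorm_two_indicator_Ioo_const (by linarith) (by positivity)]
  refine eLpNorm_mono fun x => ?_
  by_cases hx : x ∈ Ioo (N + a) (N + b)
  · rw [indicator_of_mem hx, Real.norm_eq_abs, abs_of_nonneg (by positivity)]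
    exact le_norm_integral_kernel_indicator hN hd hda hb hx
  · simp [hx]

theorem tendsto_eLpNorm_integral_kernel_indicator_div {d a b : ℝ} (hd : 0 < d) (hda : d < a)
    (hab : a < b) (hb : b ^ n ≤ π / 4) :
    Tendsto (fun N => eLpNorm (fun x => ∫ y, kernel n x y * ((Ioo N (N + d)).indicator 1 y : ℝ))
        2 volume / eLpNorm ((Ioo N (N + d)).indicator 1 : ℝ → ℝ) 2 volume) atTop (𝓝 ⊤) := by
  have hC : 0 < √2 / 2 * √((a - d) ^ (n - 3)) * d * √(b - a) / √d := by
    have : 0 < a - d := sub_pos.2 hda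
    have : 0 < b - a := sub_pos.2 hab
    positivity
  refine tendsto_nhds_top_mono
    (ENNReal.tendsto_ofReal_atTop.comp (tendsto_sqrt_atTop.const_mul_atTop hC)) ?_
  filter_upwards [eventually_ge_atTop 0] with N hN
  have hf : eLpNorm ((Ioo N (N + d)).indicator 1 : ℝ → ℝ) 2 volume = ENNReal.ofReal √d := by
    simpa [Pi.one_def] using eLpNorm_two_indicator_Ioo_const (by linarith : N ≤ N + d) zero_le_one
  rw [Function.comp_apply, hf, div_mul_eq_mul_div, ENNReal.ofReal_div_of_pos (by positivity),
    mul_right_comm]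
  exact ENNReal.div_le_div_right
    (ofReal_le_eLpNorm_integral_kernel_indicator hN hd hda hab.le hb) _

end OscillatoryKernel

open OscillatoryKernel in
theorem stmt9 (n : ℕ) (hn : 3 ≤ n) :
    Filter.Tendsto
      (fun N : ℝ =>
        eLpNorm
            (fun x : ℝ => ∫ y : ℝ,
              Complex.exp (Complex.I * ((x : ℂ) - (y : ℂ)) ^ n) *
                (Real.sqrt |x * (x - y) ^ (n - 3)| : ℂ) *
                (Set.indicator (Set.Ioo N (N + (π / 16) ^ ((1 : ℝ) / n))) 1 y : ℝ))
            2 volume /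
          eLpNorm
            ((Set.indicator (Set.Ioo N (N + (π / 16) ^ ((1 : ℝ) / n))) 1 : ℝ → ℝ))
            2 volume)
      Filter.atTop (nhds ⊤) := by
  have hroot_lt : ∀ {u v : ℝ}, 0 ≤ u → u < v → u ^ ((1 : ℝ) / n) < v ^ ((1 : ℝ) / n) :=
    fun hu huv => rpow_lt_rpow hu huv (by positivity)
  refine tendsto_eLpNorm_integral_kernel_indicator_div (by positivity)
    (hroot_lt (by positivity) (by linarith [pi_pos] : π / 16 < π / 8))
    (hroot_lt (by positivity) (by linarith [pi_pos] : π / 8 < π / 4)) ?_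
  rw [one_div, Real.rpow_inv_natCast_pow (by positivity) (by omega)]
end

section
/- Let $I = (a,b)$ be a bounded interval, $k \ge 2$ an integer, and $\phi \in C^k(I)$ real-valued with $|\phi^{(k)}(t)| \ge 1$ for all $t \in I$. Then there is a constant $C_k$ depending only on $k$ such that for all $\lambda \in \mathbb{R}\setminus\{0\}$ and all $\varphi \in C^1([a,b])$, $\big| \int_I e^{i\lambda \phi(t)} \varphi(t)\,dt \big| \le C_k |\lambda|^{-1/k} \big( |\varphi(b)| + \int_I |\varphi'(t)|\,dt \big)$. -/
/-!
If `|φ'| ≥ δ` and `φ''` has constant sign, integrating `e^{iλφ} = (1/φ') · (e^{iλφ}/(iλ))'` by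
parts bounds `∫ e^{iλφ}` by `4/(δ|λ|)`, since `1/φ'` is monotone and bounded by `1/δ`.
If `|g'| ≥ δ` on `[u, v]`, then `|g x| ≥ δ |x - x₀|` for some `x₀`; applied to `g = φ⁽ʲ⁾`, this
gives `|φ⁽ʲ⁾| ≥ δρ` outside the window `|x - x₀| < ρ`. With `ρ = (δ|λ|)^(-1/(j+1))`, bounding the
window trivially and the two remaining pieces by induction gives the constants
`C_{j+1} = 2 C_j + 2`, i.e. `C_j = 3 · 2^j - 2`. The amplitude is then absorbed by one more
integration by parts against the primitive `x ↦ ∫_a^x e^{iλφ}`, whose bound on compact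
subintervals of `(a, b)` extends to `[a, b]` by continuity.
-/

open MeasureTheory Real Set intervalIntegral

theorem norm_cexp_I_mul_ofReal_mul (lam x : ℝ) :
    ‖Complex.exp (Complex.I * lam * x)‖ = 1 := by
  simpa [mul_assoc] using Complex.norm_exp_I_mul_ofReal (lam * x)

theorem norm_integral_ofReal_mul_deriv_le {h h' : ℝ → ℝ} {G G' : ℝ → ℂ} {u v M : ℝ}
    (huv : u ≤ v) (hh : ContinuousOn h (Icc u v)) (hG : ContinuousOn G (Icc u v))
    (hhd : ∀ t ∈ Ioo u v, HasDerivAt h (h' t) t) (hGd : ∀ t ∈ Ioo u v, HasDerivAt G (G' t) t)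
    (hh' : IntervalIntegrable h' volume u v) (hG' : IntervalIntegrable G' volume u v)
    (hM : ∀ t ∈ Icc u v, ‖G t‖ ≤ M) :
    ‖∫ t in u..v, (h t : ℂ) * G' t‖ ≤
      |h v| * ‖G v‖ + |h u| * ‖G u‖ + M * ∫ t in u..v, |h' t| := by
  rw [← uIcc_of_le huv] at hh hG
  have hIoo : Ioo (min u v) (max u v) = Ioo u v := by rw [min_eq_left huv, max_eq_right huv]
  rw [integral_mul_deriv_eq_deriv_mul_of_hasDerivAt (u := fun t => (h t : ℂ))
    (Complex.continuous_ofReal.comp_continuousOn hh)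
    hG (fun t ht => (hhd t (hIoo ▸ ht)).ofReal_comp) (fun t ht => hGd t (hIoo ▸ ht))
    ⟨hh'.1.ofReal, hh'.2.ofReal⟩ hG']
  have hrest : ‖∫ t in u..v, (h' t : ℂ) * G t‖ ≤ M * ∫ t in u..v, |h' t| := by
    rw [← intervalIntegral.integral_const_mul]
    refine norm_integral_le_of_norm_le huv (ae_of_all _ fun t ht => ?_) (hh'.abs.const_mul M)
    rw [norm_mul, Complex.norm_real, Real.norm_eq_abs, mul_comm]
    exact mul_le_mul_of_nonneg_right (hM t (Ioc_subset_Icc_self ht)) (abs_nonneg _)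
  calc _ ≤ ‖(h v : ℂ) * G v‖ + ‖(h u : ℂ) * G u‖ + ‖∫ t in u..v, (h' t : ℂ) * G t‖ :=
        norm_sub_le_of_le (norm_sub_le _ _) le_rfl
    _ ≤ _ := by simp only [norm_mul, Complex.norm_real, Real.norm_eq_abs]; linarith

theorem integral_abs_deriv_eq_abs_sub {f f' : ℝ → ℝ} {u v : ℝ} (huv : u ≤ v)
    (hf : ∀ t ∈ Icc u v, HasDerivAt f (f' t) t) (hf' : IntervalIntegrable f' volume u v)
    (hsign : (∀ t ∈ Icc u v, 0 ≤ f' t) ∨ (∀ t ∈ Icc u v, f' t ≤ 0)) :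
    ∫ t in u..v, |f' t| = |f v - f u| := by
  rw [← uIcc_of_le huv] at hf hsign
  rw [← integral_eq_sub_of_hasDerivAt hf hf']
  rcases hsign with hpos | hneg
  · rw [integral_congr fun t ht => abs_of_nonneg (hpos t ht),
      abs_of_nonneg (integral_nonneg huv fun t ht => hpos t (Icc_subset_uIcc ht))]
  · have h0 : 0 ≤ ∫ t in u..v, -f' t :=
      integral_nonneg huv fun t ht => neg_nonneg.2 (hneg t (Icc_subset_uIcc ht))
    rw [intervalIntegral.integral_neg] at h0
    rw [integral_congr fun t ht => abs_of_nonpos (hneg t ht), intervalIntegral.integral_neg,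
      abs_of_nonpos (by linarith)]

theorem norm_integral_exp_le_of_mul_deriv_eq_one {φ φ' h h' : ℝ → ℝ} {u v M lam : ℝ}
    (huv : u ≤ v) (hlam : lam ≠ 0)
    (hφ : ∀ t ∈ Icc u v, HasDerivAt φ (φ' t) t) (hφ' : ContinuousOn φ' (Icc u v))
    (hh : ∀ t ∈ Icc u v, HasDerivAt h (h' t) t) (hh' : IntervalIntegrable h' volume u v)
    (hsign : (∀ t ∈ Icc u v, 0 ≤ h' t) ∨ (∀ t ∈ Icc u v, h' t ≤ 0))
    (hinv : ∀ t ∈ Icc u v, h t * φ' t = 1) (hM : ∀ t ∈ Icc u v, |h t| ≤ M) :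
    ‖∫ t in u..v, Complex.exp (Complex.I * lam * φ t)‖ ≤ 4 * M / |lam| := by
  have hc : Complex.I * lam ≠ 0 := mul_ne_zero Complex.I_ne_zero (Complex.ofReal_ne_zero.2 hlam)
  set E : ℝ → ℂ := fun t => Complex.exp (Complex.I * lam * φ t)
  set G : ℝ → ℂ := fun t => E t / (Complex.I * lam)
  have hGd : ∀ t ∈ Icc u v, HasDerivAt G (φ' t * E t) t := fun t ht =>
    (((hφ t ht).ofReal_comp.const_mul (Complex.I * lam)).cexp.div_const
      (Complex.I * lam)).congr_deriv (by rw [mul_div_assoc, mul_div_cancel_left₀ _ hc, mul_comm])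
  have hG : ∀ t, ‖G t‖ = |lam|⁻¹ := fun t => by
    simp only [G, E, norm_div, norm_cexp_I_mul_ofReal_mul, norm_mul, Complex.norm_I,
      Complex.norm_real, Real.norm_eq_abs, one_mul, one_div]
  have hEc : ContinuousOn E (Icc u v) := continuousOn_of_forall_continuousAt fun t ht =>
    ((hφ t ht).ofReal_comp.const_mul (Complex.I * lam)).cexp.continuousAt
  have hibp := norm_integral_ofReal_mul_deriv_le huv
    (continuousOn_of_forall_continuousAt fun t ht => (hh t ht).continuousAt)
    (continuousOn_of_forall_continuousAt fun t ht => (hGd t ht).continuousAt)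
    (fun t ht => hh t (Ioo_subset_Icc_self ht)) (fun t ht => hGd t (Ioo_subset_Icc_self ht)) hh'
    (((Complex.continuous_ofReal.comp_continuousOn hφ').mul hEc).intervalIntegrable_of_Icc huv)
    (fun t _ => (hG t).le)
  have hint : ∫ t in u..v, (h t : ℂ) * (φ' t * E t) = ∫ t in u..v, E t :=
    integral_congr fun t ht => by
      rw [← mul_assoc, ← Complex.ofReal_mul, hinv t (uIcc_of_le huv ▸ ht), Complex.ofReal_one,
        one_mul]
  have hu := hM u (left_mem_Icc.2 huv)
  have hv := hM v (right_mem_Icc.2 huv)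
  have hvar : ∫ t in u..v, |h' t| ≤ 2 * M := by
    rw [integral_abs_deriv_eq_abs_sub huv hh hh' hsign]
    linarith [abs_sub (h v) (h u)]
  rw [hint, hG, hG] at hibp
  refine hibp.trans ?_
  calc _ ≤ M * |lam|⁻¹ + M * |lam|⁻¹ + |lam|⁻¹ * (2 * M) := by gcongr
    _ = 4 * M / |lam| := by ring

theorem norm_integral_exp_le_of_le_abs_deriv {φ φ' φ'' : ℝ → ℝ} {u v δ lam : ℝ}
    (huv : u ≤ v) (hδ : 0 < δ) (hlam : lam ≠ 0)
    (hφ : ∀ t ∈ Icc u v, HasDerivAt φ (φ' t) t) (hφ' : ∀ t ∈ Icc u v, HasDerivAt φ' (φ'' t) t)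
    (hφ'' : ContinuousOn φ'' (Icc u v))
    (hsign : (∀ t ∈ Icc u v, 0 ≤ φ'' t) ∨ (∀ t ∈ Icc u v, φ'' t ≤ 0))
    (hlow : ∀ t ∈ Icc u v, δ ≤ |φ' t|) :
    ‖∫ t in u..v, Complex.exp (Complex.I * lam * φ t)‖ ≤ 4 / (δ * |lam|) := by
  have hne : ∀ t ∈ Icc u v, φ' t ≠ 0 := fun t ht h0 => by
    have := hlow t ht; rw [h0, abs_zero] at this; linarith
  have hφ'c : ContinuousOn φ' (Icc u v) :=
    continuousOn_of_forall_continuousAt fun t ht => (hφ' t ht).continuousAt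
  have hbound := norm_integral_exp_le_of_mul_deriv_eq_one (h := fun t => (φ' t)⁻¹)
    (M := δ⁻¹) huv hlam hφ hφ'c
    (fun t ht => (hφ' t ht).inv (hne t ht))
    ((hφ''.neg.div (hφ'c.pow 2) fun t ht => pow_ne_zero 2 (hne t ht)).intervalIntegrable_of_Icc huv)
    (hsign.symm.imp (fun h t ht => div_nonneg (neg_nonneg.2 (h t ht)) (sq_nonneg _))
      (fun h t ht => div_nonpos_of_nonpos_of_nonneg (neg_nonpos.2 (h t ht)) (sq_nonneg _)))
    (fun t ht => inv_mul_cancel₀ (hne t ht))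
    (fun t ht => by rw [abs_inv]; exact inv_anti₀ hδ (hlow t ht))
  rwa [← div_eq_mul_inv, div_div] at hbound

theorem mul_abs_sub_le_abs_sub_of_le_abs_deriv {g g' : ℝ → ℝ} {u v δ x y : ℝ}
    (hg : ∀ t ∈ Icc u v, HasDerivAt g (g' t) t) (hlow : ∀ t ∈ Icc u v, δ ≤ |g' t|)
    (hx : x ∈ Icc u v) (hy : y ∈ Icc u v) :
    δ * |y - x| ≤ |g y - g x| := by
  wlog hxy : x < y generalizing x y
  · rcases (not_lt.1 hxy).eq_or_lt with rfl | hyx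
    · simp
    · rw [abs_sub_comm, abs_sub_comm (g y)]; exact this hy hx hyx
  have hsub : Icc x y ⊆ Icc u v := Icc_subset_Icc hx.1 hy.2
  obtain ⟨c, hc, hslope⟩ := exists_hasDerivAt_eq_slope g g' hxy
    (continuousOn_of_forall_continuousAt fun t ht => (hg t (hsub ht)).continuousAt)
    fun t ht => hg t (hsub (Ioo_subset_Icc_self ht))
  have hyx : 0 < y - x := sub_pos.2 hxy
  rw [eq_div_iff hyx.ne'] at hslope
  rw [← hslope, abs_mul, abs_of_pos hyx]
  exact mul_le_mul_of_nonneg_right (hlow c (hsub (Ioo_subset_Icc_self hc))) hyx.le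

-- The minimum point of `|g|` works: `g` does not change sign on `[u, v]` unless it vanishes there.
theorem exists_mul_abs_sub_le_abs_of_le_abs_deriv {g g' : ℝ → ℝ} {u v δ : ℝ} (huv : u ≤ v)
    (hg : ∀ t ∈ Icc u v, HasDerivAt g (g' t) t) (hlow : ∀ t ∈ Icc u v, δ ≤ |g' t|) :
    ∃ x₀ ∈ Icc u v, ∀ x ∈ Icc u v, δ * |x - x₀| ≤ |g x| := by
  have hgc : ContinuousOn g (Icc u v) :=
    continuousOn_of_forall_continuousAt fun t ht => (hg t ht).continuousAt
  obtain ⟨x₀, hx₀, hmin⟩ := isCompact_Icc.exists_isMinOn (nonempty_Icc.2 huv) hgc.abs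
  refine ⟨x₀, hx₀, fun x hx => ?_⟩
  have hsame : 0 ≤ g x * g x₀ := by
    by_contra! hneg
    have hzero : (0 : ℝ) ∈ uIcc (g x) (g x₀) := mem_uIcc.2 <| (mul_neg_iff.1 hneg).symm.imp
      (fun h => ⟨h.1.le, h.2.le⟩) (fun h => ⟨h.2.le, h.1.le⟩)
    obtain ⟨z, hz, hgz⟩ := intermediate_value_uIcc (hgc.mono (uIcc_subset_Icc hx hx₀)) hzero
    have : |g x₀| ≤ |g z| := hmin (uIcc_subset_Icc hx hx₀ hz)
    rw [hgz, abs_zero, abs_nonpos_iff] at this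
    rw [this, mul_zero] at hneg
    exact lt_irrefl 0 hneg
  have hle : |g x₀| ≤ |g x| := hmin hx
  calc δ * |x - x₀| ≤ |g x - g x₀| := mul_abs_sub_le_abs_sub_of_le_abs_deriv hg hlow hx₀ hx
    _ ≤ |g x| := by
      rw [abs_le]; constructor <;> cases abs_cases (g x) <;> cases abs_cases (g x₀) <;> nlinarith

theorem rpow_mul_rpow_neg_inv_succ {M : ℝ} (hM : 0 < M) {j : ℕ} (hj : j ≠ 0) :
    (M * M ^ (-(1 : ℝ) / (j + 1 : ℕ))) ^ (-(1 : ℝ) / j) = M ^ (-(1 : ℝ) / (j + 1 : ℕ)) := by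
  have hj' : (j : ℝ) ≠ 0 := Nat.cast_ne_zero.2 hj
  have hexp : (1 : ℝ) + -1 / (j + 1 : ℕ) ≠ 0 := by
    push_cast; field_simp; rw [add_neg_cancel_right]; exact div_ne_zero hj' (by positivity)
  rw [← rpow_one_add' hM.le hexp, ← rpow_mul hM.le]
  congr 1
  push_cast
  field_simp
  ring

theorem norm_integral_le_of_bound_off_window {E : ℝ → ℂ} {u v x₀ ρ B : ℝ} (huv : u ≤ v)
    (hx₀ : x₀ ∈ Icc u v) (hρ : 0 ≤ ρ) (hB : 0 ≤ B) (hEc : ContinuousOn E (Icc u v))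
    (hE : ∀ t ∈ Icc u v, ‖E t‖ ≤ 1)
    (hside : ∀ w z, u ≤ w → w ≤ z → z ≤ v → (∀ t ∈ Icc w z, ρ ≤ |t - x₀|) →
      ‖∫ t in w..z, E t‖ ≤ B) :
    ‖∫ t in u..v, E t‖ ≤ 2 * B + 2 * ρ := by
  set p := max u (x₀ - ρ)
  set q := min v (x₀ + ρ)
  have hup : u ≤ p := le_max_left _ _
  have hpq : p ≤ q := (max_le hx₀.1 (by linarith)).trans (le_min hx₀.2 (by linarith))
  have hqv : q ≤ v := min_le_left _ _
  have hleft : ‖∫ t in u..p, E t‖ ≤ B := by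
    rcases le_total (x₀ - ρ) u with h | h
    · rwa [show p = u from max_eq_left h, integral_same, norm_zero]
    · rw [show p = x₀ - ρ from max_eq_right h]
      refine hside u _ le_rfl h (by linarith [hx₀.2]) fun t ht => ?_
      rw [abs_sub_comm, abs_of_nonneg (by linarith [ht.2])]; linarith [ht.2]
  have hright : ‖∫ t in q..v, E t‖ ≤ B := by
    rcases le_total v (x₀ + ρ) with h | h
    · rwa [show q = v from min_eq_left h, integral_same, norm_zero]
    · rw [show q = x₀ + ρ from min_eq_right h]
      refine hside _ v (by linarith [hx₀.1]) h le_rfl fun t ht => ?_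
      rw [abs_of_nonneg (by linarith [ht.1])]; linarith [ht.1]
  have hmid : ‖∫ t in p..q, E t‖ ≤ 2 * ρ := by
    refine (norm_integral_le_of_norm_le_const fun t ht => hE t ?_).trans ?_
    · rw [uIoc_of_le hpq] at ht
      exact ⟨hup.trans ht.1.le, ht.2.trans hqv⟩
    · rw [one_mul, abs_of_nonneg (sub_nonneg.2 hpq)]
      linarith [le_max_right u (x₀ - ρ), min_le_right v (x₀ + ρ)]
  have hint : ∀ x ∈ Icc u v, ∀ y ∈ Icc u v, IntervalIntegrable E volume x y :=
    fun x hx y hy => (hEc.mono (uIcc_subset_Icc hx hy)).intervalIntegrable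
  have huI : u ∈ Icc u v := left_mem_Icc.2 huv
  have hpI : p ∈ Icc u v := ⟨hup, hpq.trans hqv⟩
  have hqI : q ∈ Icc u v := ⟨hup.trans hpq, hqv⟩
  rw [← integral_add_adjacent_intervals (hint u huI q hqI) (hint q hqI v (right_mem_Icc.2 huv)),
    ← integral_add_adjacent_intervals (hint u huI p hpI) (hint p hpI q hqI)]
  calc _ ≤ ‖∫ t in u..p, E t‖ + ‖∫ t in p..q, E t‖ + ‖∫ t in q..v, E t‖ := norm_add₃_le
    _ ≤ B + 2 * ρ + B := by gcongr
    _ = 2 * B + 2 * ρ := by ring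

theorem norm_integral_le_of_subinterval_bound_of_le_abs_deriv {E : ℝ → ℂ} {g g' : ℝ → ℝ}
    {u v δ A L : ℝ} {j : ℕ} (hj : j ≠ 0) (huv : u ≤ v) (hδ : 0 < δ) (hL : 0 < L) (hA : 0 ≤ A)
    (hEc : ContinuousOn E (Icc u v)) (hE : ∀ t ∈ Icc u v, ‖E t‖ ≤ 1)
    (hg : ∀ t ∈ Icc u v, HasDerivAt g (g' t) t) (hlow : ∀ t ∈ Icc u v, δ ≤ |g' t|)
    (hsub : ∀ w z δ', u ≤ w → w ≤ z → z ≤ v → 0 < δ' → (∀ t ∈ Icc w z, δ' ≤ |g t|) →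
      ‖∫ t in w..z, E t‖ ≤ A * (δ' * L) ^ (-(1 : ℝ) / j)) :
    ‖∫ t in u..v, E t‖ ≤ (2 * A + 2) * (δ * L) ^ (-(1 : ℝ) / (j + 1 : ℕ)) := by
  set ρ := (δ * L) ^ (-(1 : ℝ) / (j + 1 : ℕ))
  have hρ : 0 < ρ := rpow_pos_of_pos (by positivity) _
  obtain ⟨x₀, hx₀, hpiv⟩ := exists_mul_abs_sub_le_abs_of_le_abs_deriv huv hg hlow
  -- `ρ` is the solution of `(δ ρ L) ^ (-1/j) = ρ`.
  have hside : ∀ w z, u ≤ w → w ≤ z → z ≤ v → (∀ t ∈ Icc w z, ρ ≤ |t - x₀|) →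
      ‖∫ t in w..z, E t‖ ≤ A * ρ := fun w z huw hwz hzv hfar => by
    have hbound := hsub w z (δ * ρ) huw hwz hzv (by positivity) fun t ht =>
      (mul_le_mul_of_nonneg_left (hfar t ht) hδ.le).trans (hpiv t (Icc_subset_Icc huw hzv ht))
    rwa [show δ * ρ * L = δ * L * ρ by ring,
      rpow_mul_rpow_neg_inv_succ (by positivity) hj] at hbound
  calc _ ≤ 2 * (A * ρ) + 2 * ρ :=
        norm_integral_le_of_bound_off_window huv hx₀ hρ.le (by positivity) hEc hE hside
    _ = (2 * A + 2) * ρ := by ring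

theorem hasDerivAt_iteratedDerivWithin_of_isOpen {φ : ℝ → ℝ} {s : Set ℝ} {n i : ℕ} {t : ℝ}
    (hs : IsOpen s) (hφ : ContDiffOn ℝ n φ s) (hi : i < n) (ht : t ∈ s) :
    HasDerivAt (iteratedDerivWithin i φ s) (iteratedDerivWithin (i + 1) φ s t) t := by
  have hdiff := (hφ.differentiableOn_iteratedDerivWithin (by exact_mod_cast hi) hs.uniqueDiffOn t
    ht).differentiableAt (hs.mem_nhds ht)
  rw [iteratedDerivWithin_succ, derivWithin_of_isOpen hs ht]
  exact hdiff.hasDerivAt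

theorem nonneg_or_nonpos_of_continuousOn_of_ne_zero {f : ℝ → ℝ} {u v : ℝ}
    (hf : ContinuousOn f (Icc u v)) (hne : ∀ t ∈ Icc u v, f t ≠ 0) :
    (∀ t ∈ Icc u v, 0 ≤ f t) ∨ (∀ t ∈ Icc u v, f t ≤ 0) := by
  by_contra! ⟨⟨x, hx, hfx⟩, ⟨y, hy, hfy⟩⟩
  have hxy : uIcc x y ⊆ Icc u v := uIcc_subset_Icc hx hy
  obtain ⟨z, hz, hfz⟩ := intermediate_value_uIcc (hf.mono hxy)
    (mem_uIcc.2 (Or.inl ⟨hfx.le, hfy.le⟩))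
  exact hne z (hxy hz) hfz

theorem norm_integral_exp_le_of_le_abs_iteratedDerivWithin {φ : ℝ → ℝ} {s : Set ℝ} {k j : ℕ}
    {lam : ℝ} (hs : IsOpen s) (hφ : ContDiffOn ℝ k φ s) (hlam : lam ≠ 0) (hj : 2 ≤ j)
    (hjk : j ≤ k) {u v δ : ℝ} (huv : u ≤ v) (hδ : 0 < δ) (huvs : Icc u v ⊆ s)
    (hlow : ∀ t ∈ Icc u v, δ ≤ |iteratedDerivWithin j φ s t|) :
    ‖∫ t in u..v, Complex.exp (Complex.I * lam * φ t)‖ ≤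
      (3 * 2 ^ j - 2) * (δ * |lam|) ^ (-(1 : ℝ) / j) := by
  have hd : ∀ i < k, ∀ t ∈ s,
      HasDerivAt (iteratedDerivWithin i φ s) (iteratedDerivWithin (i + 1) φ s t) t :=
    fun i hi t ht => hasDerivAt_iteratedDerivWithin_of_isOpen hs hφ hi ht
  have hEc : ContinuousOn (fun t => Complex.exp (Complex.I * lam * φ t)) s :=
    Complex.continuous_exp.comp_continuousOn
      (continuousOn_const.mul (Complex.continuous_ofReal.comp_continuousOn hφ.continuousOn))
  have hE : ∀ t, ‖Complex.exp (Complex.I * lam * φ t)‖ ≤ 1 :=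
    fun t => (norm_cexp_I_mul_ofReal_mul lam (φ t)).le
  have hL : 0 < |lam| := abs_pos.2 hlam
  induction j, hj using Nat.le_induction generalizing u v δ with
  | base =>
    have hφd : ∀ t ∈ s, HasDerivAt φ (iteratedDerivWithin 1 φ s t) t := fun t ht => by
      simpa using hd 0 (by omega) t ht
    have hc2 : ContinuousOn (iteratedDerivWithin 2 φ s) s :=
      hφ.continuousOn_iteratedDerivWithin (by exact_mod_cast hjk) hs.uniqueDiffOn
    have key := norm_integral_le_of_subinterval_bound_of_le_abs_deriv (j := 1) one_ne_zero huv
      hδ hL (by norm_num : (0 : ℝ) ≤ 4) (hEc.mono huvs) (fun t _ => hE t)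
      (fun t ht => hd 1 (by omega) t (huvs ht)) hlow
      fun w z δ' huw hwz hzv hδ' hlow' => by
        have hwzs : Icc w z ⊆ Icc u v := Icc_subset_Icc huw hzv
        have hsign := nonneg_or_nonpos_of_continuousOn_of_ne_zero (hc2.mono (hwzs.trans huvs))
          fun t ht h0 => by have := hlow t (hwzs ht); rw [h0, abs_zero] at this; linarith
        rw [Nat.cast_one, div_one, rpow_neg_one, ← div_eq_mul_inv]
        exact norm_integral_exp_le_of_le_abs_deriv hwz hδ' hlam
          (fun t ht => hφd t (huvs (hwzs ht))) (fun t ht => hd 1 (by omega) t (huvs (hwzs ht)))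
          (hc2.mono (hwzs.trans huvs)) hsign hlow'
    norm_num at key ⊢
    exact key
  | succ j hj ih =>
    have key := norm_integral_le_of_subinterval_bound_of_le_abs_deriv (by omega) huv hδ hL
      (by linarith [one_le_pow₀ (M₀ := ℝ) (n := j) one_le_two]) (hEc.mono huvs) (fun t _ => hE t)
      (fun t ht => hd j (by omega) t (huvs ht)) hlow fun w z δ' huw hwz hzv hδ' hlow' =>
        ih (by omega) hwz hδ' ((Icc_subset_Icc huw hzv).trans huvs) hlow'
    rw [pow_succ]
    convert key using 2
    ring

theorem norm_integral_le_of_forall_mem_Ioo {E : ℝ → ℂ} {a b B : ℝ} (hab : a < b)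
    (hE : IntegrableOn E (Icc a b))
    (hB : ∀ u ∈ Ioo a b, ∀ v ∈ Ioo a b, ‖∫ t in u..v, E t‖ ≤ B) :
    ∀ v ∈ Icc a b, ‖∫ t in a..v, E t‖ ≤ B := by
  set F : ℝ → ℂ := fun x => ∫ t in a..x, E t
  have hF : ContinuousOn F (Icc a b) := by
    simpa [uIcc_of_le hab.le] using
      continuousOn_primitive_interval (a := a) (b := b) (by rwa [uIcc_of_le hab.le])
  have hint : ∀ x ∈ Icc a b, IntervalIntegrable E volume a x := fun x hx =>
    (hE.mono_set (uIcc_subset_Icc (left_mem_Icc.2 hab.le) hx)).intervalIntegrable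
  have hP : ContinuousOn (fun p : ℝ × ℝ => ‖F p.2 - F p.1‖) (Icc a b ×ˢ Icc a b) :=
    ((hF.comp continuousOn_snd fun _ hp => hp.2).sub
      (hF.comp continuousOn_fst fun _ hp => hp.1)).norm
  have hclosure : closure (Ioo a b ×ˢ Ioo a b) = Icc a b ×ˢ Icc a b := by
    rw [closure_prod_eq, closure_Ioo hab.ne]
  intro v hv
  have := le_on_closure (f := fun p : ℝ × ℝ => ‖F p.2 - F p.1‖) (g := fun _ => B)
    (fun p hp => by
      simp only [F]
      rw [integral_interval_sub_left (hint _ (Ioo_subset_Icc_self hp.2))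
        (hint _ (Ioo_subset_Icc_self hp.1))]
      exact hB _ hp.1 _ hp.2)
    (hclosure ▸ hP) continuousOn_const (x := (a, v))
    (hclosure ▸ ⟨left_mem_Icc.2 hab.le, hv⟩)
  simpa [F] using this

theorem norm_integral_mul_le_of_norm_primitive_le {E : ℝ → ℂ} {ψ : ℝ → ℝ} {a b B : ℝ}
    (hab : a < b) (hE : IntegrableOn E (Icc a b)) (hEc : ContinuousOn E (Ioo a b))
    (hψ : ContDiffOn ℝ 1 ψ (Icc a b)) (hB : ∀ x ∈ Icc a b, ‖∫ t in a..x, E t‖ ≤ B) :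
    ‖∫ t in a..b, E t * ψ t‖ ≤ B * (|ψ b| + ∫ t in a..b, |derivWithin ψ (Icc a b) t|) := by
  have hint : ∀ x ∈ Icc a b, IntervalIntegrable E volume a x := fun x hx =>
    (hE.mono_set (uIcc_subset_Icc (left_mem_Icc.2 hab.le) hx)).intervalIntegrable
  have hψd : ∀ t ∈ Ioo a b, HasDerivAt ψ (derivWithin ψ (Icc a b) t) t := fun t ht => by
    have hnhds : Icc a b ∈ nhds t := Icc_mem_nhds ht.1 ht.2
    rw [derivWithin_of_mem_nhds hnhds]
    exact ((hψ.differentiableOn one_ne_zero t (Ioo_subset_Icc_self ht)).differentiableAt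
      hnhds).hasDerivAt
  have hibp := norm_integral_ofReal_mul_deriv_le (G := fun x => ∫ t in a..x, E t) (G' := E)
    hab.le hψ.continuousOn
    (by simpa [uIcc_of_le hab.le] using
      continuousOn_primitive_interval (a := a) (b := b) (by rwa [uIcc_of_le hab.le]))
    hψd
    (fun t ht => integral_hasDerivAt_right (hint t (Ioo_subset_Icc_self ht))
      (hEc.stronglyMeasurableAtFilter isOpen_Ioo t ht) (hEc.continuousAt (isOpen_Ioo.mem_nhds ht)))
    ((hψ.continuousOn_derivWithin (uniqueDiffOn_Icc hab) le_rfl).intervalIntegrable_of_Icc hab.le)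
    (hint b (right_mem_Icc.2 hab.le)) hB
  simp only [integral_same, norm_zero, mul_zero, add_zero] at hibp
  simp_rw [mul_comm (E _)]
  refine hibp.trans ?_
  have := mul_le_mul_of_nonneg_left (hB b (right_mem_Icc.2 hab.le)) (abs_nonneg (ψ b))
  linarith

theorem stmt11 (k : ℕ) (hk : 2 ≤ k) :
    ∃ C : ℝ, 0 < C ∧ ∀ (a b : ℝ), a < b → ∀ φ : ℝ → ℝ,
      ContDiffOn ℝ k φ (Set.Ioo a b) →
      (∀ t ∈ Set.Ioo a b, 1 ≤ |iteratedDerivWithin k φ (Set.Ioo a b) t|) →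
      ∀ lam : ℝ, lam ≠ 0 → ∀ ψ : ℝ → ℝ, ContDiffOn ℝ 1 ψ (Set.Icc a b) →
        ‖∫ t in Set.Ioo a b, Complex.exp (Complex.I * lam * φ t) * (ψ t : ℂ)‖ ≤
          C * |lam| ^ (-(1 : ℝ) / k) *
            (|ψ b| + ∫ t in Set.Ioo a b, |derivWithin ψ (Set.Icc a b) t|) := by
  refine ⟨3 * 2 ^ k - 2, by linarith [one_lt_pow₀ (M₀ := ℝ) one_lt_two (by omega : k ≠ 0)], ?_⟩
  intro a b hab φ hφ hder lam hlam ψ hψ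
  set E : ℝ → ℂ := fun t => Complex.exp (Complex.I * lam * φ t)
  have hEc : ContinuousOn E (Ioo a b) := Complex.continuous_exp.comp_continuousOn
    (continuousOn_const.mul (Complex.continuous_ofReal.comp_continuousOn hφ.continuousOn))
  have hE : IntegrableOn E (Icc a b) := (integrableOn_Icc_iff_integrableOn_Ioo).2 <|
    IntegrableOn.of_bound measure_Ioo_lt_top (hEc.aestronglyMeasurable measurableSet_Ioo) 1
      (ae_of_all _ fun t => (norm_cexp_I_mul_ofReal_mul lam (φ t)).le)
  have hosc : ∀ u ∈ Ioo a b, ∀ v ∈ Ioo a b,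
      ‖∫ t in u..v, E t‖ ≤ (3 * 2 ^ k - 2) * |lam| ^ (-(1 : ℝ) / k) := by
    intro u hu v hv
    wlog huv : u ≤ v generalizing u v
    · rw [integral_symm, norm_neg]; exact this v hv u hu (le_of_not_ge huv)
    simpa using norm_integral_exp_le_of_le_abs_iteratedDerivWithin isOpen_Ioo hφ hlam hk le_rfl
      huv one_pos (Icc_subset_Ioo hu.1 hv.2) fun t ht => hder t (Icc_subset_Ioo hu.1 hv.2 ht)
  have := norm_integral_mul_le_of_norm_primitive_le hab hE hEc hψ
    (norm_integral_le_of_forall_mem_Ioo hab hE hosc)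
  rwa [integral_of_le hab.le, integral_of_le hab.le, integral_Ioc_eq_integral_Ioo,
    integral_Ioc_eq_integral_Ioo] at this
end
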